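/- The distribution-based inconsistency measure I_D satisfies Free Formula Independence: if α is a free formula of K ∪ {α} (i.e., α belongs to no minimal unsatisfiable subset of K ∪ {α}), then I_D(K ∪ {α}) = I_D(K). -/

import Mathlib

inductive PropForm (V : Type) : Type
  | var : V → PropForm V
  | neg : PropForm V → PropForm V
  | conj : PropForm V → PropForm V → PropForm V
  | disj : PropForm V → PropForm V → PropForm V
  deriving DecidableEq

namespace PropForm
def eval {V : Type} (v : V → Bool) : PropForm V → Bool
  | var p => v p
  | neg f => !(eval v f)
  | conj f g => eval v f && eval v g
  | disj f g => eval v f || eval v g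
end PropForm

/-- A finite knowledge base `K` is satisfiable (consistent) if some valuation makes
all its formulas true. -/
def Sat {V : Type} (K : Finset (PropForm V)) : Prop :=
  ∃ v : V → Bool, ∀ f ∈ K, f.eval v = true

/-- `M` is a minimal unsatisfiable set: inconsistent, with every proper subset consistent. -/
def IsMUS {V : Type} (M : Finset (PropForm V)) : Prop :=
  ¬ Sat M ∧ ∀ M' ⊂ M, Sat M'

/-- The set of minimal unsatisfiable subsets of `K`. -/
def MUSes {V : Type} (K : Finset (PropForm V)) : Set (Finset (PropForm V)) :=
  {M | M ⊆ K ∧ IsMUS M}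

/-- A partial MUS-decomposition of `K`: a family of pairwise-disjoint inconsistent
subsets of `K` such that the MUSes of their union are exactly the disjoint union of
the MUSes of the components. -/
def IsPartialMUSdecomp {V : Type} [DecidableEq V] (K : Finset (PropForm V))
    (T : Finset (Finset (PropForm V))) : Prop :=
  (∀ Ki ∈ T, Ki ⊆ K ∧ ¬ Sat Ki) ∧
  (↑T : Set (Finset (PropForm V))).PairwiseDisjoint id ∧
  MUSes (T.sup id) = ⋃ Ki ∈ T, MUSes Ki ∧
  (↑T : Set (Finset (PropForm V))).Pairwise fun A B => Disjoint (MUSes A) (MUSes B)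

/-- The distribution index: maximal cardinality of a partial MUS-decomposition. -/
noncomputable def muD {V : Type} [DecidableEq V] (K : Finset (PropForm V)) : ℕ :=
  sSup {n : ℕ | ∃ T : Finset (Finset (PropForm V)), IsPartialMUSdecomp K T ∧ T.card = n}

open Classical in
/-- The distribution-based inconsistency measure. -/
noncomputable def ID {V : Type} [DecidableEq V] (K : Finset (PropForm V)) : ℕ :=
  if Sat K then 0 else muD K


/-! A free formula can be deleted from every component of a partial MUS-decomposition: the
components stay inconsistent, pairwise disjoint and distinct, and their MUSes do not change,
since a free formula lies in none of them. Conversely, every partial MUS-decomposition of `K`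
is one of `K ∪ {α}`. So both knowledge bases admit decompositions of the same sizes. -/

variable {V : Type}

def IsFree (α : PropForm V) (S : Finset (PropForm V)) : Prop :=
  ∀ M ∈ MUSes S, α ∉ M

theorem Sat.mono {S T : Finset (PropForm V)} (h : S ⊆ T) (hT : Sat T) : Sat S :=
  let ⟨v, hv⟩ := hT
  ⟨v, fun f hf => hv f (h hf)⟩

theorem sat_empty : Sat (∅ : Finset (PropForm V)) :=
  ⟨fun _ => true, by simp⟩

theorem nonempty_of_not_sat {S : Finset (PropForm V)} (h : ¬ Sat S) : S.Nonempty :=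
  Finset.nonempty_iff_ne_empty.mpr fun hS => h (hS ▸ sat_empty)

theorem exists_isMUS_subset_of_not_sat (S : Finset (PropForm V)) (h : ¬ Sat S) :
    ∃ M ⊆ S, IsMUS M := by
  induction S using Finset.strongInduction with
  | _ S ih =>
    by_cases hmin : ∀ S' ⊂ S, Sat S'
    · exact ⟨S, subset_rfl, h, hmin⟩
    · push Not at hmin
      obtain ⟨S', hS'S, hS'⟩ := hmin
      obtain ⟨M, hMS', hM⟩ := ih S' hS'S hS'
      exact ⟨M, hMS'.trans hS'S.subset, hM⟩

theorem MUSes_mono {A B : Finset (PropForm V)} (h : A ⊆ B) : MUSes A ⊆ MUSes B :=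
  fun _ hM => ⟨hM.1.trans h, hM.2⟩

namespace IsFree

variable {α : PropForm V} {S A : Finset (PropForm V)}

theorem mono (h : A ⊆ S) (hS : IsFree α S) : IsFree α A :=
  fun M hM => hS M (MUSes_mono h hM)

variable [DecidableEq V]

theorem subset_erase_of_mem_MUSes (hS : IsFree α S) {M : Finset (PropForm V)}
    (hM : M ∈ MUSes S) : M ⊆ S.erase α :=
  fun _ hx => Finset.mem_erase.mpr ⟨fun e => hS M hM (e ▸ hx), hM.1 hx⟩

theorem MUSes_erase (hS : IsFree α S) : MUSes (S.erase α) = MUSes S :=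
  (MUSes_mono (Finset.erase_subset α S)).antisymm
    fun _ hM => ⟨hS.subset_erase_of_mem_MUSes hM, hM.2⟩

theorem sat_erase_iff (hS : IsFree α S) : Sat (S.erase α) ↔ Sat S := by
  refine ⟨fun hsat => ?_, Sat.mono (Finset.erase_subset α S)⟩
  by_contra hunsat
  obtain ⟨M, hMS, hM⟩ := exists_isMUS_subset_of_not_sat S hunsat
  exact hM.1 (hsat.mono (hS.subset_erase_of_mem_MUSes ⟨hMS, hM⟩))

end IsFree

theorem Finset.injOn_erase_of_pairwiseDisjoint {β : Type*} [DecidableEq β]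
    {T : Finset (Finset β)} (a : β) (hT : (↑T : Set (Finset β)).PairwiseDisjoint id)
    (hne : ∀ A ∈ T, (A.erase a).Nonempty) :
    Set.InjOn (fun A : Finset β => A.erase a) ↑T := by
  intro A hA B hB hAB
  by_contra hAneB
  obtain ⟨x, hx⟩ := hne A hA
  have hAB : A.erase a = B.erase a := hAB
  have hxB : x ∈ B := Finset.mem_of_mem_erase (hAB ▸ hx)
  exact Finset.disjoint_left.mp (hT hA hB hAneB) (Finset.mem_of_mem_erase hx) hxB

namespace IsPartialMUSdecomp

variable [DecidableEq V] {K K' : Finset (PropForm V)} {T : Finset (Finset (PropForm V))}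

theorem mono (h : K ⊆ K') (hT : IsPartialMUSdecomp K T) : IsPartialMUSdecomp K' T :=
  ⟨fun A hA => ⟨(hT.1 A hA).1.trans h, (hT.1 A hA).2⟩, hT.2⟩

theorem injOn_erase {α : PropForm V} (hT : IsPartialMUSdecomp K T) (hfree : IsFree α K) :
    Set.InjOn (fun A : Finset (PropForm V) => A.erase α) ↑T :=
  Finset.injOn_erase_of_pairwiseDisjoint α hT.2.1 fun A hA =>
    nonempty_of_not_sat fun hsat =>
      (hT.1 A hA).2 (((hfree.mono (hT.1 A hA).1).sat_erase_iff).mp hsat)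

theorem image_erase {α : PropForm V} (hT : IsPartialMUSdecomp K T) (hfree : IsFree α K) :
    IsPartialMUSdecomp (K.erase α) (T.image (fun A : Finset (PropForm V) => A.erase α)) := by
  have hinj := hT.injOn_erase hfree
  obtain ⟨hsub, hdisj, hMUSes, hMUSes_disj⟩ := hT
  have hfreeA : ∀ A ∈ T, IsFree α A := fun A hA => hfree.mono (hsub A hA).1
  have hsup :
      (T.image (fun A : Finset (PropForm V) => A.erase α)).sup id = (T.sup id).erase α := by
    simp only [Finset.sup_image, Finset.erase_eq]
    exact Finset.sup_sdiff_right T id {α}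
  have hsupK : T.sup id ⊆ K := Finset.sup_le fun A hA => (hsub A hA).1
  refine ⟨?_, ?_, ?_, ?_⟩
  · simp only [Finset.mem_image, forall_exists_index, and_imp, forall_apply_eq_imp_iff₂]
    exact fun A hA => ⟨Finset.erase_subset_erase α (hsub A hA).1,
      fun hsat => (hsub A hA).2 ((hfreeA A hA).sat_erase_iff.mp hsat)⟩
  · rw [Finset.coe_image]
    exact hdisj.image_of_le fun A => Finset.erase_subset α A
  · rw [hsup, (hfree.mono hsupK).MUSes_erase, hMUSes, Finset.set_biUnion_finset_image]
    exact Set.iUnion₂_congr fun A hA => ((hfreeA A hA).MUSes_erase).symm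
  · rw [Finset.coe_image, hinj.pairwise_image]
    intro A hA B hB hAB
    simp only [Function.onFun, (hfreeA A hA).MUSes_erase, (hfreeA B hB).MUSes_erase]
    exact hMUSes_disj hA hB hAB

end IsPartialMUSdecomp

section

variable [DecidableEq V] {K : Finset (PropForm V)} {α : PropForm V}

theorem sat_insert_iff_of_isFree (hfree : IsFree α (insert α K)) : Sat (insert α K) ↔ Sat K :=
  ⟨Sat.mono (Finset.subset_insert α K), fun hK =>
    hfree.sat_erase_iff.mp (hK.mono (Finset.erase_insert_subset α K))⟩

theorem muD_insert_of_isFree (hfree : IsFree α (insert α K)) : muD (insert α K) = muD K := by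
  unfold muD
  congr 1
  ext n
  constructor
  · rintro ⟨T, hT, rfl⟩
    exact ⟨_, (hT.image_erase hfree).mono (Finset.erase_insert_subset α K),
      Finset.card_image_of_injOn (hT.injOn_erase hfree)⟩
  · rintro ⟨T, hT, rfl⟩
    exact ⟨T, hT.mono (Finset.subset_insert α K), rfl⟩

end

theorem stmt13 {V : Type} [DecidableEq V] (K : Finset (PropForm V)) (α : PropForm V)
    (hfree : ∀ M ∈ MUSes (insert α K), α ∉ M) :
    ID (insert α K) = ID K := by
  classical
  simp only [ID, sat_insert_iff_of_isFree hfree, muD_insert_of_isFree hfree]
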